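/- A sum over a finite abelian group of products of nontrivial characters is Galois-invariant and hence rational: if ζ is a primitive q-th root of unity, then Σ_{j=1}^{q-1} 1/((1−ζ^j)(1−ζ^{-j})) = (q−1)(q−5)/12 + (q−1)/2, i.e., equals (q²−1)/12. -/

import Mathlib

/-!
For `w ≠ 1` with `w ^ q = 1`, differentiating the geometric series gives
`1 / (1 - w) = -(1 / q) ∑_{k < q} k w ^ k`, so `1 / (1 - ζ ^ j)` and `1 / (1 - ζ ^ (-j))` are,
up to the factor `-1 / q`, the discrete Fourier transform of `k ↦ k` at `j` and `-j`.
Parseval's identity for the discrete Fourier transform on `ℤ / q` then turns the sum over all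
`j < q` into `q ∑ k ^ 2`; the term `j = 0`, which the sum omits, is `(∑ k) ^ 2`, and
`(q ∑ k ^ 2 - (∑ k) ^ 2) / q ^ 2 = (q ^ 2 - 1) / 12`.
-/

open Finset

section CommRing

variable {R : Type*} [CommRing R]

theorem one_sub_mul_sum_range_natCast_mul_pow (z : R) (n : ℕ) :
    (1 - z) * ∑ k ∈ range n, (k : R) * z ^ k =
      ∑ k ∈ range n, z ^ k - 1 - (n - 1) * z ^ n := by
  induction n with
  | zero => simp
  | succ n ih =>
    rw [sum_range_succ, sum_range_succ, mul_add, ih]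
    push_cast
    ring

theorem two_mul_sum_range_natCast (n : ℕ) : 2 * ∑ k ∈ range n, (k : R) = n * (n - 1) := by
  induction n with
  | zero => simp
  | succ n ih => rw [sum_range_succ, mul_add, ih]; push_cast; ring

theorem six_mul_sum_range_natCast_sq (n : ℕ) :
    6 * ∑ k ∈ range n, (k : R) ^ 2 = n * (n - 1) * (2 * n - 1) := by
  induction n with
  | zero => simp
  | succ n ih => rw [sum_range_succ, mul_add, ih]; push_cast; ring

end CommRing

section IsDomain

variable {R : Type*} [CommRing R] [IsDomain R] {z : R} {n : ℕ}

theorem geom_sum_eq_zero_of_pow_eq_one (hz : z ^ n = 1) (hz1 : z ≠ 1) :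
    ∑ i ∈ range n, z ^ i = 0 := by
  refine (mul_eq_zero.mp ?_).resolve_left (sub_ne_zero.mpr hz1.symm)
  rw [mul_neg_geom_sum, hz, sub_self]

theorem one_sub_mul_sum_range_natCast_mul_pow_of_pow_eq_one (hz : z ^ n = 1) (hz1 : z ≠ 1) :
    (1 - z) * ∑ k ∈ range n, (k : R) * z ^ k = -n := by
  rw [one_sub_mul_sum_range_natCast_mul_pow, geom_sum_eq_zero_of_pow_eq_one hz hz1, hz]
  ring

end IsDomain

namespace IsPrimitiveRoot

variable {K : Type*} [Field K] {ζ : K} {n : ℕ}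

theorem inv_one_sub_pow (hζ : IsPrimitiveRoot ζ n) {j : ℕ} (hj : j ∈ Ico 1 n) :
    (1 - ζ ^ j)⁻¹ = -(∑ k ∈ range n, (k : K) * (ζ ^ j) ^ k) / n := by
  rw [mem_Ico] at hj
  have : NeZero n := ⟨by omega⟩
  have hn : (n : K) ≠ 0 := hζ.neZero'.out
  have hz1 : ζ ^ j ≠ 1 := hζ.pow_ne_one_of_pos_of_lt (by omega) hj.2
  have hzn : (ζ ^ j) ^ n = 1 := by rw [pow_right_comm, hζ.pow_eq_one, one_pow]
  have key := one_sub_mul_sum_range_natCast_mul_pow_of_pow_eq_one hzn hz1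
  have hz : 1 - ζ ^ j ≠ 0 := sub_ne_zero.mpr hz1.symm
  field_simp
  linear_combination key

theorem sum_range_pow_pow_mul_pow_pow_inv (hζ : IsPrimitiveRoot ζ n) {k m : ℕ}
    (hk : k < n) (hm : m < n) :
    ∑ j ∈ range n, (ζ ^ j) ^ k * (ζ⁻¹ ^ j) ^ m = if k = m then (n : K) else 0 := by
  have hζ0 : ζ ≠ 0 := hζ.ne_zero (by omega)
  simp_rw [← pow_mul, mul_comm _ k, mul_comm _ m, pow_mul, ← mul_pow]
  split_ifs with hkm
  · simp [hkm, hζ0]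
  · refine geom_sum_eq_zero_of_pow_eq_one ?_ ?_
    · rw [mul_pow, ← pow_mul, ← pow_mul, mul_comm k, mul_comm m, pow_mul, pow_mul,
        hζ.pow_eq_one, hζ.inv.pow_eq_one, one_pow, one_pow, one_mul]
    · rw [inv_pow, ne_eq, mul_inv_eq_one₀ (pow_ne_zero _ hζ0)]
      exact fun h => hkm (hζ.pow_inj hk hm h)

theorem sum_range_mul_sum_inv (hζ : IsPrimitiveRoot ζ n) (f g : ℕ → K) :
    ∑ j ∈ range n,
        (∑ k ∈ range n, f k * (ζ ^ j) ^ k) * ∑ m ∈ range n, g m * (ζ⁻¹ ^ j) ^ m =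
      n * ∑ k ∈ range n, f k * g k := by
  calc _ = ∑ k ∈ range n, ∑ m ∈ range n,
        f k * g m * ∑ j ∈ range n, (ζ ^ j) ^ k * (ζ⁻¹ ^ j) ^ m := by
        simp_rw [sum_mul_sum, mul_sum]
        rw [sum_comm]
        refine sum_congr rfl fun k _ => ?_
        rw [sum_comm]
        refine sum_congr rfl fun m _ => sum_congr rfl fun j _ => by ring
    _ = ∑ k ∈ range n, ∑ m ∈ range n, if k = m then n * (f k * g m) else 0 := by
        refine sum_congr rfl fun k hk => sum_congr rfl fun m hm => ?_
        rw [hζ.sum_range_pow_pow_mul_pow_pow_inv (mem_range.mp hk) (mem_range.mp hm)]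
        split_ifs <;> ring
    _ = _ := by
        rw [mul_sum]
        exact sum_congr rfl fun k hk => by rw [sum_ite_eq, if_pos hk]

theorem sum_Ico_one_div_one_sub_pow_mul_one_sub_pow_inv [NeZero n] (hζ : IsPrimitiveRoot ζ n) :
    ∑ j ∈ Ico 1 n, 1 / ((1 - ζ ^ j) * (1 - (ζ ^ j)⁻¹)) =
      (n * ∑ k ∈ range n, (k : K) ^ 2 - (∑ k ∈ range n, (k : K)) ^ 2) / n ^ 2 := by
  set S : K → K := fun w => ∑ k ∈ range n, (k : K) * w ^ k
  have hterm : ∀ j ∈ Ico 1 n,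
      1 / ((1 - ζ ^ j) * (1 - (ζ ^ j)⁻¹)) = S (ζ ^ j) * S (ζ⁻¹ ^ j) / n ^ 2 := by
    intro j hj
    rw [one_div, mul_inv, ← inv_pow, hζ.inv_one_sub_pow hj, hζ.inv.inv_one_sub_pow hj]
    ring
  have hS1 : S 1 = ∑ k ∈ range n, (k : K) := by simp [S]
  have hparseval :
      ∑ j ∈ range n, S (ζ ^ j) * S (ζ⁻¹ ^ j) = n * ∑ k ∈ range n, (k : K) ^ 2 := by
    simp only [S, hζ.sum_range_mul_sum_inv, sq]
  calc _ = (∑ j ∈ Ico 1 n, S (ζ ^ j) * S (ζ⁻¹ ^ j)) / n ^ 2 := by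
        rw [sum_congr rfl hterm, sum_div]
    _ = (∑ j ∈ range n, S (ζ ^ j) * S (ζ⁻¹ ^ j) - S 1 * S 1) / n ^ 2 := by
        rw [range_eq_Ico, sum_eq_sum_Ico_succ_bot (Nat.pos_of_neZero n), pow_zero, pow_zero,
          add_sub_cancel_left]
    _ = _ := by rw [hparseval, hS1, ← sq]

end IsPrimitiveRoot

/-- For `ζ` a primitive `q`-th root of unity (`q ≥ 2`), the Galois-invariant sum
`Σ_{j=1}^{q-1} 1/((1−ζʲ)(1−ζ^{−j}))` is rational and equals `(q²−1)/12`. -/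
theorem sum_one_div_norm_one_sub_primitive_root (q : ℕ) (hq : 2 ≤ q) (ζ : ℂ)
    (hζ : IsPrimitiveRoot ζ q) :
    ∑ j ∈ Ico 1 q, 1 / ((1 - ζ ^ j) * (1 - (ζ ^ j)⁻¹)) =
      ((q : ℂ) ^ 2 - 1) / 12 := by
  have : NeZero q := ⟨by omega⟩
  have hq0 : (q : ℂ) ≠ 0 := NeZero.ne _
  rw [hζ.sum_Ico_one_div_one_sub_pow_mul_one_sub_pow_inv]
  have h1 := two_mul_sum_range_natCast (R := ℂ) q
  have h2 := six_mul_sum_range_natCast_sq (R := ℂ) q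
  field_simp
  linear_combination (2 * q) * h2 - 3 * (2 * ∑ k ∈ range q, (k : ℂ) + q * (q - 1)) * h1
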